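/- Let Δ be a complete nonsingular fan in ℤⁿ such that (a) every primitive relation has right-hand side 0 or a single ray generator, and (b) Δ has no exceptional divisors, i.e., no ray generator is a sum of other linearly independent ray generators. Then every linearly independent set of ray generators of Δ spans a cone of Δ, and consequently the associated toric variety is isomorphic to a product of projective spaces. -/

import Mathlib

/-!
A minimal non-cone inside a linearly independent set of rays is a primitive set `P`; its sum can
be neither `0` (independence), nor a ray of `P` (then `P` minus that ray would sum to `0`), nor a
ray outside `P` (that ray would be exceptional). So independent sets of rays span cones.

Then primitive sets are the minimal dependent sets of rays. If the sum of one of them is a ray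
`ρ`, subtracting a multiple of its linear relation writes `ρ` as a positive combination of an
independent set `S` of rays; `insert ρ S` is then primitive, so its sum is another ray, a positive
combination of `S` with all coefficients raised by one, and iterating gives infinitely many rays.
Hence all primitive sets sum to `0`. Two distinct primitive sets `K₁, K₂` through a common ray
would then have `∑ (K₁ \ K₂) = ∑ (K₂ \ K₁)`, so their symmetric difference contains a primitive
set; minimality of `K₁ ∪ K₂` forces it to be the whole symmetric difference, and then
`0 = 2 • ∑ (K₁ \ K₂)` contradicts the independence of `K₁ \ K₂`. Finally, completeness puts `-ρ`
in a cone, which exhibits each ray `ρ` inside a primitive set: the primitive sets partition the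
rays.
-/

/-- A complete nonsingular (simplicial) fan in ℤⁿ, described combinatorially:
cones are recorded by their (finite) sets of primitive ray generators. -/
structure CompleteNonsingFan (n : ℕ) where
  rays : Finset (Fin n → ℤ)
  cones : Finset (Finset (Fin n → ℤ))
  empty_mem : ∅ ∈ cones
  singleton_mem : ∀ ρ ∈ rays, {ρ} ∈ cones
  cone_rays : ∀ σ ∈ cones, σ ⊆ rays
  face_mem : ∀ σ ∈ cones, ∀ τ ⊆ σ, τ ∈ cones
  /-- nonsingularity: the generators of every cone form part of a ℤ-basis of ℤⁿ -/
  nonsingular : ∀ σ ∈ cones, ∃ b : Module.Basis (Fin n) ℤ (Fin n → ℤ),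
      (σ : Set (Fin n → ℤ)) ⊆ Set.range ⇑b
  /-- completeness: every point of ℝⁿ lies in some cone -/
  complete : ∀ x : Fin n → ℝ, ∃ σ ∈ cones, ∃ c : (Fin n → ℤ) → ℝ,
      (∀ v, 0 ≤ c v) ∧ x = ∑ v ∈ σ, c v • (fun i => (v i : ℝ))

/-- A primitive set: a set of rays not spanning a cone, every proper subset of
which spans a cone. -/
def IsPrimitiveSet {n : ℕ} (F : CompleteNonsingFan n) (P : Finset (Fin n → ℤ)) : Prop :=
  P ⊆ F.rays ∧ P ∉ F.cones ∧ ∀ ρ ∈ P, P.erase ρ ∈ F.cones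

open Finset Submodule

section LinearAlgebra

variable {ι R M : Type*} [AddCommGroup M]

theorem LinearIndepOn.sum_smul_ne_zero [Ring R] [Module R M] {v : ι → M} {s : Finset ι}
    (h : LinearIndepOn R v (s : Set ι)) (hs : s.Nonempty) {c : ι → R} (hc : ∀ i ∈ s, c i ≠ 0) :
    ∑ i ∈ s, c i • v i ≠ 0 := by
  obtain ⟨i, hi⟩ := hs
  exact fun h0 => hc i hi (linearIndepOn_finset_iff.1 h c h0 i hi)

theorem LinearIndepOn.sum_ne_zero [Ring R] [Nontrivial R] [Module R M] {v : ι → M}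
    {s : Finset ι} (h : LinearIndepOn R v (s : Set ι)) (hs : s.Nonempty) :
    ∑ i ∈ s, v i ≠ 0 := by
  simpa using h.sum_smul_ne_zero hs (c := fun _ => 1) fun _ _ => one_ne_zero

theorem LinearIndepOn.sum_ne_sum_of_disjoint [Ring R] [Nontrivial R] [Module R M] [DecidableEq ι]
    {v : ι → M} {A B : Finset ι} (h : LinearIndepOn R v ((A ∪ B : Finset ι) : Set ι))
    (hAB : Disjoint A B) (hne : (A ∪ B).Nonempty) : ∑ i ∈ A, v i ≠ ∑ i ∈ B, v i := by
  intro hsum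
  have hrel : ∑ i ∈ A ∪ B, (if i ∈ A then (1 : R) else -1) • v i
      = ∑ i ∈ A, v i - ∑ i ∈ B, v i := by
    rw [sum_union hAB, sub_eq_add_neg, ← sum_neg_distrib]
    congr 1 <;> refine sum_congr rfl fun i hi => ?_
    · rw [if_pos hi, one_smul]
    · rw [if_neg (disjoint_right.1 hAB hi), neg_one_smul]
  refine h.sum_smul_ne_zero hne (c := fun i => if i ∈ A then 1 else -1)
    (fun i _ => by split_ifs <;> simp) ?_
  rw [hrel, hsum, sub_self]

/-- Subtracting a suitable multiple of a linear relation turns the coefficients `1` into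
nonnegative ones, vanishing at the index where the relation is largest. -/
theorem exists_sum_eq_sum_pos_smul_of_not_linearIndepOn {K : Type*} [Field K] [LinearOrder K]
    [IsStrictOrderedRing K] [Module K M] [DecidableEq ι] {v : ι → M} {s : Finset ι}
    (h : ¬ LinearIndepOn K v (s : Set ι)) :
    ∃ w ∈ s, ∃ t ⊆ s.erase w, ∃ e : ι → K,
      (∀ i ∈ t, 0 < e i) ∧ ∑ i ∈ s, v i = ∑ i ∈ t, e i • v i := by
  obtain ⟨a, ha, hpos⟩ : ∃ a : ι → K, ∑ i ∈ s, a i • v i = 0 ∧ ∃ i ∈ s, 0 < a i := by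
    obtain ⟨a, ha, i, hi, hai⟩ := not_linearIndepOn_finset_iff.1 h
    rcases hai.lt_or_gt with hneg | hpos
    · exact ⟨-a, by simp [neg_smul, sum_neg_distrib, ha], i, hi, by simpa using hneg⟩
    · exact ⟨a, ha, i, hi, hpos⟩
  obtain ⟨i, hi, hai⟩ := hpos
  obtain ⟨w, hw, hmax⟩ := s.exists_max_image a ⟨i, hi⟩
  have haw : 0 < a w := hai.trans_le (hmax i hi)
  refine ⟨w, hw, s.filter (a · < a w), fun j hj => ?_, fun j => 1 - a j / a w,
    fun j hj => ?_, ?_⟩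
  · obtain ⟨hj, hlt⟩ := mem_filter.1 hj
    exact mem_erase.2 ⟨fun hjw => hlt.ne (congrArg a hjw), hj⟩
  · rw [sub_pos, div_lt_one haw]
    exact (mem_filter.1 hj).2
  rw [sum_filter_of_ne]
  · calc ∑ i ∈ s, v i = ∑ i ∈ s, v i - (a w)⁻¹ • ∑ i ∈ s, a i • v i := by
          rw [ha, smul_zero, sub_zero]
      _ = ∑ i ∈ s, (1 - a i / a w) • v i := by
          rw [smul_sum, ← sum_sub_distrib]
          refine sum_congr rfl fun j _ => ?_
          rw [sub_smul, one_smul, smul_smul, div_eq_inv_mul]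
  · intro j hj hne
    refine (hmax j hj).lt_of_ne fun hjw => hne ?_
    simp only [hjw, div_self haw.ne', sub_self, zero_smul]

end LinearAlgebra

def castVec (n : ℕ) : (Fin n → ℤ) →+ (Fin n → ℝ) := (Int.castAddHom ℝ).compLeft (Fin n)

theorem LinearIndepOn.of_castVec {n : ℕ} {s : Set (Fin n → ℤ)}
    (h : LinearIndepOn ℝ (castVec n) s) : LinearIndepOn ℤ id s :=
  LinearIndependent.of_comp (castVec n).toIntLinearMap (h.restrict_scalars' ℤ)

theorem linearIndependent_castVec_basis {n : ℕ} (b : Module.Basis (Fin n) ℤ (Fin n → ℤ)) :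
    LinearIndependent ℝ (castVec n ∘ b) := by
  have hB : IsUnit ((Pi.basisFun ℤ (Fin n)).toMatrix b) :=
    let _ := (Pi.basisFun ℤ (Fin n)).invertibleToMatrix b; isUnit_of_invertible _
  convert Matrix.linearIndependent_rows_of_isUnit (R := ℝ)
    ((Matrix.isUnit_transpose _).2 (hB.map (Int.castRingHom ℝ).mapMatrix)) using 1
  ext i j
  simp [castVec, Module.Basis.toMatrix_apply]

namespace CompleteNonsingFan

variable {n : ℕ} (F : CompleteNonsingFan n)

theorem linearIndepOn_castVec_of_mem_cones {σ : Finset (Fin n → ℤ)} (hσ : σ ∈ F.cones) :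
    LinearIndepOn ℝ (castVec n) (σ : Set (Fin n → ℤ)) := by
  obtain ⟨b, hb⟩ := F.nonsingular σ hσ
  exact ((linearIndepOn_range_iff b.injective _).2 (linearIndependent_castVec_basis b)).mono hb

theorem linearIndepOn_of_mem_cones {σ : Finset (Fin n → ℤ)} (hσ : σ ∈ F.cones) :
    LinearIndepOn ℤ id (σ : Set (Fin n → ℤ)) :=
  (F.linearIndepOn_castVec_of_mem_cones hσ).of_castVec

theorem castVec_ne_zero_of_mem_rays {ρ : Fin n → ℤ} (hρ : ρ ∈ F.rays) : castVec n ρ ≠ 0 :=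
  (F.linearIndepOn_castVec_of_mem_cones (F.singleton_mem ρ hρ)).ne_zero (by simp)

theorem exists_isPrimitiveSet_subset {T : Finset (Fin n → ℤ)} (hT : T ⊆ F.rays)
    (hTc : T ∉ F.cones) : ∃ P ⊆ T, IsPrimitiveSet F P := by
  induction T using Finset.strongInduction with
  | H T ih =>
    by_cases h : ∀ ρ ∈ T, T.erase ρ ∈ F.cones
    · exact ⟨T, subset_rfl, hT, hTc, h⟩
    push Not at h
    obtain ⟨ρ, hρ, hc⟩ := h
    obtain ⟨P, hPT, hP⟩ := ih _ (erase_ssubset hρ) ((erase_subset ρ T).trans hT) hc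
    exact ⟨P, hPT.trans (erase_subset ρ T), hP⟩

end CompleteNonsingFan

namespace IsPrimitiveSet

variable {n : ℕ} {F : CompleteNonsingFan n} {P : Finset (Fin n → ℤ)}

theorem nonempty (hP : IsPrimitiveSet F P) : P.Nonempty :=
  nonempty_iff_ne_empty.2 fun h => hP.2.1 (h ▸ F.empty_mem)

theorem sum_notMem (hP : IsPrimitiveSet F P) : ∑ v ∈ P, v ∉ P := by
  set ρ := ∑ v ∈ P, v
  intro hρ
  rcases (P.erase ρ).eq_empty_or_nonempty with he | hne
  · have hPρ : P = {ρ} := by rw [← insert_erase hρ, he, insert_empty]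
    exact hP.2.1 (hPρ ▸ F.singleton_mem ρ (hP.1 hρ))
  · refine (F.linearIndepOn_of_mem_cones (hP.2.2 ρ hρ)).sum_ne_zero hne ?_
    simp [ρ, sum_erase_eq_sub hρ]

theorem not_subset_erase {L : Finset (Fin n → ℤ)} {x : Fin n → ℤ} (hP : IsPrimitiveSet F P)
    (hL : IsPrimitiveSet F L) (hx : x ∈ L) : ¬ P ⊆ L.erase x :=
  fun h => hP.2.1 (F.face_mem _ (hL.2.2 x hx) P h)

theorem sdiff_nonempty {K₁ K₂ : Finset (Fin n → ℤ)} (h₁ : IsPrimitiveSet F K₁)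
    (h₂ : IsPrimitiveSet F K₂) (hne : K₁ ≠ K₂) : (K₁ \ K₂).Nonempty := by
  rw [nonempty_iff_ne_empty, Ne, sdiff_eq_empty_iff_subset]
  intro hsub
  obtain ⟨y, hy₂, hy₁⟩ := exists_of_ssubset (hsub.ssubset_of_ne hne)
  exact h₁.not_subset_erase h₂ hy₂ fun z hz => mem_erase.2 ⟨ne_of_mem_of_not_mem hz hy₁, hsub hz⟩

theorem exists_mem_of_subset_union_sdiff {L₁ L₂ : Finset (Fin n → ℤ)} {x : Fin n → ℤ}
    (hP : IsPrimitiveSet F P) (hL₂ : IsPrimitiveSet F L₂) (hxL₂ : x ∈ L₂) (hxP : x ∉ P)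
    (hPL : P ⊆ (L₁ \ L₂) ∪ (L₂ \ L₁)) : ∃ y ∈ P, y ∈ L₁ := by
  by_contra! hPL₁
  refine hP.not_subset_erase hL₂ hxL₂ fun z hz => ?_
  rcases mem_union.1 (hPL hz) with hz₁ | hz₂
  · exact absurd (mem_sdiff.1 hz₁).1 (hPL₁ z hz)
  · exact mem_erase.2 ⟨ne_of_mem_of_not_mem hz hxP, (mem_sdiff.1 hz₂).1⟩

theorem eq_of_mem_of_mem (hzero : ∀ P, IsPrimitiveSet F P → ∑ v ∈ P, v = 0)
    {K₁ K₂ : Finset (Fin n → ℤ)} {x : Fin n → ℤ} (h₁ : IsPrimitiveSet F K₁)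
    (h₂ : IsPrimitiveSet F K₂) (hx₁ : x ∈ K₁) (hx₂ : x ∈ K₂) : K₁ = K₂ := by
  induction hU : K₁ ∪ K₂ using Finset.strongInduction generalizing K₁ K₂ x with
  | H U ih =>
  subst hU
  by_contra hne
  have hsum : ∑ v ∈ K₁ \ K₂, v = ∑ v ∈ K₂ \ K₁, v :=
    sum_sdiff_eq_sum_sdiff_iff.2 ((hzero K₁ h₁).trans (hzero K₂ h₂).symm)
  obtain ⟨P, hPD, hP⟩ : ∃ P ⊆ (K₁ \ K₂) ∪ (K₂ \ K₁), IsPrimitiveSet F P := by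
    refine F.exists_isPrimitiveSet_subset
      (union_subset (sdiff_subset.trans h₁.1) (sdiff_subset.trans h₂.1)) fun hc => ?_
    exact (F.linearIndepOn_of_mem_cones hc).sum_ne_sum_of_disjoint disjoint_sdiff_sdiff
      ((sdiff_nonempty h₁ h₂ hne).mono subset_union_left) hsum
  have hxP : x ∉ P := fun h => by simpa [hx₁, hx₂] using hPD h
  -- by minimality of `K₁ ∪ K₂`, `P` must contain the whole symmetric difference
  have hside : ∀ {L₁ L₂}, IsPrimitiveSet F L₁ → IsPrimitiveSet F L₂ → x ∈ L₁ → x ∈ L₂ →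
      L₁ ∪ L₂ = K₁ ∪ K₂ → P ⊆ (L₁ \ L₂) ∪ (L₂ \ L₁) → L₂ \ L₁ ⊆ P := by
    intro L₁ L₂ hL₁ hL₂ hxL₁ hxL₂ hL hPL
    obtain ⟨y, hyP, hyL₁⟩ := hP.exists_mem_of_subset_union_sdiff hL₂ hxL₂ hxP hPL
    have hsub : P ∪ L₁ ⊆ L₁ ∪ L₂ := union_subset (hPL.trans
      (union_subset (sdiff_subset.trans subset_union_left) (sdiff_subset.trans subset_union_right)))
      subset_union_left
    rcases hsub.eq_or_ssubset with heq | hlt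
    · intro z hz
      have : z ∈ P ∪ L₁ := heq ▸ mem_union_right _ (mem_sdiff.1 hz).1
      simpa [(mem_sdiff.1 hz).2] using this
    · exact absurd ((ih _ (hL ▸ hlt) hP hL₁ hyP hyL₁ rfl) ▸ hxL₁) hxP
  have hPeq : P = (K₁ \ K₂) ∪ (K₂ \ K₁) := hPD.antisymm (union_subset
    (hside h₂ h₁ hx₂ hx₁ (union_comm _ _) (union_comm (K₁ \ K₂) _ ▸ hPD))
    (hside h₁ h₂ hx₁ hx₂ rfl hPD))
  have hA : K₁ \ K₂ ⊆ K₁.erase x :=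
    fun z hz => mem_erase.2 ⟨ne_of_mem_of_not_mem hz (by simp [hx₂]), (mem_sdiff.1 hz).1⟩
  refine ((F.linearIndepOn_of_mem_cones (h₁.2.2 x hx₁)).mono (coe_subset.2 hA)).sum_smul_ne_zero
    (c := fun _ => 2) (sdiff_nonempty h₁ h₂ hne) (fun _ _ => two_ne_zero) ?_
  · rw [← hzero P hP, hPeq, sum_union disjoint_sdiff_sdiff, ← hsum]
    simp [two_smul, sum_add_distrib]

end IsPrimitiveSet

namespace CompleteNonsingFan

variable {n : ℕ} (F : CompleteNonsingFan n)

theorem mem_cones_of_linearIndependent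
    (hprim : ∀ P, IsPrimitiveSet F P → (∑ v ∈ P, v = 0 ∨ ∑ v ∈ P, v ∈ F.rays))
    (hnoexc : ∀ ρ ∈ F.rays, ∀ T ⊆ F.rays.erase ρ, T.Nonempty →
        LinearIndependent ℤ (fun v : T => (v : Fin n → ℤ)) → ∑ v ∈ T, v ≠ ρ) :
    ∀ T ⊆ F.rays, LinearIndependent ℤ (fun v : T => (v : Fin n → ℤ)) → T ∈ F.cones := by
  intro T hT hind
  by_contra hTc
  obtain ⟨P, hPT, hP⟩ := F.exists_isPrimitiveSet_subset hT hTc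
  have hPind : LinearIndepOn ℤ id (P : Set (Fin n → ℤ)) :=
    LinearIndepOn.mono (v := id) hind (by exact_mod_cast hPT)
  rcases hprim P hP with hzero | hray
  · exact hPind.sum_ne_zero hP.nonempty hzero
  · refine hnoexc _ hray P (fun v hv => mem_erase.2 ⟨?_, hP.1 hv⟩) hP.nonempty hPind rfl
    rintro rfl
    exact hP.sum_notMem hv

section IndependentSetsAreCones

variable {F}
variable (hcone : ∀ T ⊆ F.rays, LinearIndependent ℤ (fun v : T => (v : Fin n → ℤ)) → T ∈ F.cones)
include hcone

theorem mem_cones_of_linearIndepOn_castVec {T : Finset (Fin n → ℤ)} (hT : T ⊆ F.rays)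
    (h : LinearIndepOn ℝ (castVec n) (T : Set (Fin n → ℤ))) : T ∈ F.cones :=
  hcone T hT h.of_castVec

theorem isPrimitiveSet_insert {S : Finset (Fin n → ℤ)} {τ : Fin n → ℤ} (hS : S ⊆ F.rays)
    (hSi : LinearIndepOn ℝ (castVec n) (S : Set (Fin n → ℤ))) (hτ : τ ∈ F.rays) (hτS : τ ∉ S)
    {d : (Fin n → ℤ) → ℝ} (hd : ∀ v ∈ S, d v ≠ 0)
    (heq : castVec n τ = ∑ v ∈ S, d v • castVec n v) :
    IsPrimitiveSet F (insert τ S) := by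
  have hspan : ∀ {U : Finset (Fin n → ℤ)} (c : (Fin n → ℤ) → ℝ),
      ∑ v ∈ U, c v • castVec n v ∈ span ℝ (castVec n '' U) :=
    fun c => sum_mem fun v hv => smul_mem _ _ (subset_span (Set.mem_image_of_mem _ hv))
  refine ⟨insert_subset hτ hS, fun hc => ?_, fun x hx => ?_⟩
  · have := F.linearIndepOn_castVec_of_mem_cones hc
    rw [coe_insert, linearIndepOn_insert (by exact_mod_cast hτS)] at this
    exact this.2 (heq ▸ hspan d)
  rcases mem_insert.1 hx with rfl | hxS
  · rw [erase_insert hτS]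
    exact hcone S hS hSi.of_castVec
  rw [erase_insert_of_ne (ne_of_mem_of_not_mem hxS hτS).symm]
  refine mem_cones_of_linearIndepOn_castVec hcone
    (insert_subset hτ ((erase_subset x S).trans hS)) ?_
  rw [coe_insert, linearIndepOn_insert (by simp [hτS])]
  refine ⟨hSi.mono (by simp), fun hτspan => ?_⟩
  -- since `d x ≠ 0`, `x` would also lie in the span of the rest of `S`
  have hx : castVec n x = (d x)⁻¹ • (castVec n τ - ∑ v ∈ S.erase x, d v • castVec n v) := by
    rw [heq, ← add_sum_erase S _ hxS, add_sub_cancel_right, smul_smul,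
      inv_mul_cancel₀ (hd x hxS), one_smul]
  have hSi' := hSi
  rw [← insert_erase hxS, coe_insert, linearIndepOn_insert (by simp)] at hSi'
  exact hSi'.2 (hx ▸ smul_mem _ _ (sub_mem hτspan (hspan d)))

section PrimitiveRelations

variable (hprim : ∀ P, IsPrimitiveSet F P → (∑ v ∈ P, v = 0 ∨ ∑ v ∈ P, v ∈ F.rays))
include hprim

theorem exists_ray_castVec_eq_sum_add_nat_smul {S : Finset (Fin n → ℤ)} {τ : Fin n → ℤ}
    (hS : S ⊆ F.rays) (hSi : LinearIndepOn ℝ (castVec n) (S : Set (Fin n → ℤ)))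
    (hSne : S.Nonempty) (hτ : τ ∈ F.rays) (hτS : τ ∉ S) {d : (Fin n → ℤ) → ℝ}
    (hd : ∀ v ∈ S, 0 < d v) (heq : castVec n τ = ∑ v ∈ S, d v • castVec n v) (k : ℕ) :
    ∃ τ' ∈ F.rays, τ' ∉ S ∧ castVec n τ' = ∑ v ∈ S, (d v + k) • castVec n v := by
  induction k with
  | zero => exact ⟨τ, hτ, hτS, by simpa using heq⟩
  | succ k ih =>
    obtain ⟨τ', hτ', hτ'S, heq'⟩ := ih
    have hpos : ∀ v ∈ S, 0 < d v + k := fun v hv => by have := hd v hv; positivity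
    have hP := isPrimitiveSet_insert hcone hS hSi hτ' hτ'S (fun v hv => (hpos v hv).ne') heq'
    have hsum : castVec n (∑ v ∈ insert τ' S, v) = ∑ v ∈ S, (d v + ↑(k + 1)) • castVec n v := by
      rw [map_sum, sum_insert hτ'S, heq', ← sum_add_distrib]
      refine sum_congr rfl fun v _ => ?_
      push_cast
      module
    rcases hprim _ hP with hzero | hray
    · refine absurd hsum.symm ?_
      rw [hzero, map_zero]
      exact hSi.sum_smul_ne_zero hSne fun v hv => by have := hd v hv; positivity
    · exact ⟨_, hray, fun h => hP.sum_notMem (mem_insert_of_mem h), hsum⟩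

theorem castVec_ne_sum_smul_of_pos {S : Finset (Fin n → ℤ)} {τ : Fin n → ℤ}
    (hS : S ⊆ F.rays) (hSi : LinearIndepOn ℝ (castVec n) (S : Set (Fin n → ℤ)))
    (hSne : S.Nonempty) (hτ : τ ∈ F.rays) (hτS : τ ∉ S) {d : (Fin n → ℤ) → ℝ}
    (hd : ∀ v ∈ S, 0 < d v) : castVec n τ ≠ ∑ v ∈ S, d v • castVec n v := by
  intro heq
  choose τ' hτ' _ heq' using
    exists_ray_castVec_eq_sum_add_nat_smul hcone hprim hS hSi hSne hτ hτS hd heq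
  have hinj : Function.Injective τ' := by
    intro k m hkm
    have hkm' : ((k : ℝ) - m) • ∑ v ∈ S, castVec n v = 0 :=
      calc ((k : ℝ) - m) • ∑ v ∈ S, castVec n v
          = ∑ v ∈ S, (d v + k) • castVec n v - ∑ v ∈ S, (d v + m) • castVec n v := by
            rw [smul_sum, ← sum_sub_distrib]
            exact sum_congr rfl fun v _ => by module
        _ = 0 := by rw [← heq' k, ← heq' m, hkm, sub_self]
    rcases smul_eq_zero.1 hkm' with h | h
    · exact_mod_cast sub_eq_zero.1 h
    · exact absurd h (hSi.sum_ne_zero hSne)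
  exact F.rays.finite_toSet.not_infinite (Set.infinite_of_injective_forall_mem hinj hτ')

theorem _root_.IsPrimitiveSet.sum_eq_zero {P : Finset (Fin n → ℤ)} (hP : IsPrimitiveSet F P) :
    ∑ v ∈ P, v = 0 := by
  refine (hprim P hP).resolve_right fun hray => ?_
  have hdep : ¬ LinearIndepOn ℝ (castVec n) (P : Set (Fin n → ℤ)) :=
    fun h => hP.2.1 (mem_cones_of_linearIndepOn_castVec hcone hP.1 h)
  obtain ⟨w, hw, t, htw, e, he, hsum⟩ := exists_sum_eq_sum_pos_smul_of_not_linearIndepOn hdep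
  have htP : t ⊆ P := htw.trans (erase_subset w P)
  have hρ : castVec n (∑ v ∈ P, v) = ∑ v ∈ t, e v • castVec n v := by rw [map_sum, hsum]
  have hti : LinearIndepOn ℝ (castVec n) (t : Set (Fin n → ℤ)) :=
    (F.linearIndepOn_castVec_of_mem_cones (hP.2.2 w hw)).mono (by exact_mod_cast htw)
  have htne : t.Nonempty := nonempty_iff_ne_empty.2 fun ht =>
    F.castVec_ne_zero_of_mem_rays hray (by rw [hρ, ht, sum_empty])
  exact castVec_ne_sum_smul_of_pos hcone hprim (htP.trans hP.1) hti htne hray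
    (fun h => hP.sum_notMem (htP h)) he hρ

end PrimitiveRelations

theorem exists_isPrimitiveSet_mem {ρ : Fin n → ℤ} (hρ : ρ ∈ F.rays) :
    ∃ P, IsPrimitiveSet F P ∧ ρ ∈ P := by
  classical
  obtain ⟨σ, hσ, c, hc, hneg⟩ := F.complete (-castVec n ρ)
  replace hneg : -castVec n ρ = ∑ v ∈ σ, c v • castVec n v := hneg
  have hσi := F.linearIndepOn_castVec_of_mem_cones hσ
  have hρσ : ρ ∉ σ := by
    intro hρσ
    have hrel : ∑ v ∈ σ, (c v + if v = ρ then 1 else 0) • castVec n v = 0 := by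
      simp only [add_smul, ite_smul, one_smul, zero_smul, sum_add_distrib, sum_ite_eq',
        if_pos hρσ, ← hneg, neg_add_cancel]
    have hcρ : c ρ + 1 = 0 := by simpa using linearIndepOn_finset_iff.1 hσi _ hrel ρ hρσ
    linarith [hc ρ]
  set S := σ.filter (c · ≠ 0)
  have hSσ : S ⊆ σ := filter_subset _ σ
  have heq : castVec n ρ = ∑ v ∈ S, (-c v) • castVec n v := by
    rw [sum_filter_of_ne fun v _ h => by simpa using left_ne_zero_of_smul h,
      ← neg_neg (castVec n ρ), hneg, ← sum_neg_distrib]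
    simp only [neg_smul]
  refine ⟨insert ρ S, isPrimitiveSet_insert hcone (hSσ.trans (F.cone_rays σ hσ))
    (hσi.mono (coe_subset.2 hSσ)) hρ (fun h => hρσ (hSσ h))
    (fun v hv => neg_ne_zero.2 (mem_filter.1 hv).2) heq, mem_insert_self ρ S⟩

end IndependentSetsAreCones

end CompleteNonsingFan

/-- a complete nonsingular fan in which (a) every primitive relation
has right-hand side 0 or a single ray generator and (b) no ray generator is the sum
of a nonempty linearly independent set of other ray generators, satisfies: every
linearly independent set of ray generators spans a cone; consequently the fan is
that of a product of projective spaces, i.e. the rays partition into groups each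
summing to zero. -/
theorem stmt_12 (n : ℕ) (F : CompleteNonsingFan n)
    (hprim : ∀ P, IsPrimitiveSet F P → (∑ v ∈ P, v = 0 ∨ ∑ v ∈ P, v ∈ F.rays))
    (hnoexc : ∀ ρ ∈ F.rays, ∀ T ⊆ F.rays.erase ρ, T.Nonempty →
        LinearIndependent ℤ (fun v : T => (v : Fin n → ℤ)) → ∑ v ∈ T, v ≠ ρ) :
    (∀ T ⊆ F.rays, LinearIndependent ℤ (fun v : T => (v : Fin n → ℤ)) → T ∈ F.cones) ∧
    (∃ Pp : Finset (Finset (Fin n → ℤ)),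
        (∀ p ∈ Pp, p ⊆ F.rays ∧ p.Nonempty ∧ ∑ v ∈ p, v = 0) ∧
        (∀ ρ ∈ F.rays, ∃! p, p ∈ Pp ∧ ρ ∈ p)) := by
  classical
  have hcone := F.mem_cones_of_linearIndependent hprim hnoexc
  have hzero : ∀ P, IsPrimitiveSet F P → ∑ v ∈ P, v = 0 := fun P hP => hP.sum_eq_zero hcone hprim
  refine ⟨hcone, F.rays.powerset.filter (IsPrimitiveSet F), fun p hp => ?_, fun ρ hρ => ?_⟩
  · obtain ⟨-, hp⟩ := mem_filter.1 hp
    exact ⟨hp.1, hp.nonempty, hzero p hp⟩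
  · obtain ⟨P, hP, hρP⟩ := CompleteNonsingFan.exists_isPrimitiveSet_mem hcone hρ
    refine ⟨P, ⟨mem_filter.2 ⟨mem_powerset.2 hP.1, hP⟩, hρP⟩, fun q ⟨hq, hρq⟩ => ?_⟩
    exact (mem_filter.1 hq).2.eq_of_mem_of_mem hzero hP hρq hρP
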